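/- arXiv:0801.3986 — 3 statements merged into one kernel-verified Lean document; each statement's English description precedes it below -/
import Mathlib

section
/- Let α and δ be constants with 0 < α < 1, 0 < δ < 1, and 1 − δ − α > 0. Then D_{d−1}/D^{1−δ} tends to 0 as n → ∞ along d = n^α; that is, for every ε > 0 there exists N such that for all integers n ≥ N and all positive integers d with (d : ℝ) = n^α, one has D_{d−1} ≤ ε·D^{1−δ}, where D = V(n,d−1) − 1. -/
open Finset

/-- Hamming distance between two permutations of `{0,…,n-1}`. -/
def permDist {n : ℕ} (x y : Equiv.Perm (Fin n)) : ℕ :=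
  (Finset.univ.filter fun i => x i ≠ y i).card

/-- Weight of a permutation: number of non-fixed points. -/
def permWt {n : ℕ} (x : Equiv.Perm (Fin n)) : ℕ :=
  (Finset.univ.filter fun i => x i ≠ i).card

/-- `C` is an `(n,d)` permutation array. -/
def IsPA (n d : ℕ) (C : Finset (Equiv.Perm (Fin n))) : Prop :=
  ∀ x ∈ C, ∀ y ∈ C, x ≠ y → d ≤ permDist x y

/-- `P(n,d)`: the maximum size of an `(n,d)` permutation array. -/
noncomputable def Pmax (n d : ℕ) : ℕ :=
  sSup {m | ∃ C : Finset (Equiv.Perm (Fin n)), IsPA n d C ∧ C.card = m}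

/-- `P[n,e]`: the maximum size of a subset of `S_n` with pairwise distances at most `e`. -/
noncomputable def PmaxLe (n e : ℕ) : ℕ :=
  sSup {m | ∃ Γ : Finset (Equiv.Perm (Fin n)),
    (∀ x ∈ Γ, ∀ y ∈ Γ, x ≠ y → permDist x y ≤ e) ∧ Γ.card = m}

/-- `V(n,r) = Σ_{i=0}^{r} C(n,i)·D_i`. -/
def V (n r : ℕ) : ℕ := ∑ i ∈ Finset.range (r + 1), Nat.choose n i * numDerangements i

/-- `V₂(n,r) = Σ_{i=0}^{r} C(n,i)`. -/
def V2 (n r : ℕ) : ℕ := ∑ i ∈ Finset.range (r + 1), Nat.choose n i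

/-- `L_{i,j}` (depending also on `n` and `d`). -/
def L (n d i j : ℕ) : ℕ :=
  ∑ k ∈ Finset.Icc ((i + j + 1 - d + 1) / 2) (min i j),
    ∑ l ∈ Finset.range (min (d + 2 * k - i - j - 1) k + 1),
      Nat.choose i k * Nat.choose (n - i) (j - k) * Nat.choose k l *
        Nat.factorial (l + j - k)

/-- `T`: number of unordered pairs of distinct permutations in `S_n`, each of weight
between `1` and `d-1`, with Hamming distance at most `d-1`. -/
def Tperm (n d : ℕ) : ℕ :=
  ((Finset.univ : Finset (Equiv.Perm (Fin n) × Equiv.Perm (Fin n))).filter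
    (fun p => p.1 ≠ p.2 ∧ 1 ≤ permWt p.1 ∧ permWt p.1 ≤ d - 1 ∧
      1 ≤ permWt p.2 ∧ permWt p.2 ≤ d - 1 ∧ permDist p.1 p.2 ≤ d - 1)).card / 2

/-- Hamming weight of a binary vector. -/
def binWt {n : ℕ} (u : Fin n → Bool) : ℕ := (Finset.univ.filter fun i => u i ≠ false).card

/-- Hamming distance between binary vectors. -/
def binDist {n : ℕ} (u v : Fin n → Bool) : ℕ := (Finset.univ.filter fun i => u i ≠ v i).card

/-- `T′`: number of unordered pairs of distinct nonzero binary vectors of length `n`,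
each of Hamming weight at most `d-1`, with Hamming distance at most `d-1`. -/
def Tbin (n d : ℕ) : ℕ :=
  ((Finset.univ : Finset ((Fin n → Bool) × (Fin n → Bool))).filter
    (fun p => p.1 ≠ p.2 ∧ p.1 ≠ (fun _ => false) ∧ p.2 ≠ (fun _ => false) ∧
      binWt p.1 ≤ d - 1 ∧ binWt p.2 ≤ d - 1 ∧ binDist p.1 p.2 ≤ d - 1)).card / 2

/-! With `m = d - 1 ≤ n ^ α` we have `D_m ≤ m ^ m` and `V(n,m) - 1 ≥ C(n,m) D_m ≥ (n / m) ^ m D_m`.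
Splitting `D_m = D_m ^ δ D_m ^ (1 - δ)`, it suffices that `D_m ^ δ ≤ ε C(n,m) ^ (1 - δ)`, and
`(m ^ m) ^ δ / ((n / m) ^ m) ^ (1 - δ) = (m / n ^ (1 - δ)) ^ m ≤ n ^ (α + δ - 1)`, which tends to `0`
because `1 - δ - α > 0`. -/

open Nat Filter Topology

theorem numDerangements_le_factorial (n : ℕ) : numDerangements n ≤ n ! :=
  calc numDerangements n = Fintype.card (derangements (Fin n)) :=
        card_derangements_fin_eq_numDerangements.symm
    _ ≤ Fintype.card (Equiv.Perm (Fin n)) := Fintype.card_le_of_injective _ Subtype.val_injective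
    _ = n ! := by simp [Fintype.card_perm]

theorem Nat.pow_mul_factorial_le_pow_mul_descFactorial {n k : ℕ} (h : k ≤ n) :
    n ^ k * k ! ≤ k ^ k * n.descFactorial k := by
  have hfact : k ! = ∏ i ∈ range k, (k - i) := by
    rw [factorial_eq_prod_range_add_one, ← prod_range_reflect]
    exact prod_congr rfl fun i hi => by have := mem_range.1 hi; omega
  rw [hfact, descFactorial_eq_prod_range, pow_eq_prod_const, pow_eq_prod_const,
    ← prod_mul_distrib, ← prod_mul_distrib]
  refine prod_le_prod' fun i hi => ?_
  have : k * i ≤ n * i := Nat.mul_le_mul_right i h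
  rw [Nat.mul_sub, Nat.mul_sub, Nat.mul_comm n k]
  omega

theorem Nat.div_pow_le_choose {α : Type*} [Semifield α] [LinearOrder α] [IsStrictOrderedRing α]
    {n k : ℕ} (h : k ≤ n) : ((n : α) / k) ^ k ≤ n.choose k := by
  rcases k.eq_zero_or_pos with rfl | hk
  · simp
  have key : (n : α) ^ k * k ! ≤ n.choose k * k ^ k * k ! := by
    have := pow_mul_factorial_le_pow_mul_descFactorial h
    rw [descFactorial_eq_factorial_mul_choose] at this
    calc (n : α) ^ k * k ! ≤ (k : α) ^ k * (k ! * n.choose k) := by exact_mod_cast this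
      _ = n.choose k * k ^ k * k ! := by ring
  rw [div_pow, div_le_iff₀ (by positivity)]
  exact le_of_mul_le_mul_right key (by positivity)

theorem Real.le_mul_mul_rpow_of_rpow_le {x y ε δ : ℝ} (hx : 0 ≤ x) (hy : 0 ≤ y)
    (h : x ^ δ ≤ ε * y ^ (1 - δ)) : x ≤ ε * (y * x) ^ (1 - δ) :=
  calc x = x ^ δ * x ^ (1 - δ) := by
        rw [← Real.rpow_add' hx (by norm_num), add_sub_cancel, Real.rpow_one]
    _ ≤ ε * y ^ (1 - δ) * x ^ (1 - δ) := by gcongr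
    _ = ε * (y * x) ^ (1 - δ) := by rw [Real.mul_rpow hy hx, mul_assoc]

theorem choose_mul_numDerangements_le_V_sub_one (n : ℕ) {m : ℕ} (hm : 1 ≤ m) :
    n.choose m * numDerangements m ≤ V n m - 1 := by
  have hsub : ({0, m} : Finset ℕ) ⊆ range (m + 1) := by
    intro i hi
    simp only [mem_insert, mem_singleton] at hi
    rcases hi with rfl | rfl <;> simp
  have := sum_le_sum_of_subset (f := fun i => n.choose i * numDerangements i) hsub
  rw [sum_pair (by omega)] at this
  simp only [Nat.choose_zero_right, numDerangements_zero] at this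
  unfold V
  omega

theorem numDerangements_rpow_le {n m : ℕ} (hm : 1 ≤ m) (hmn : m ≤ n) {δ : ℝ} (hδ0 : 0 ≤ δ)
    (hδ1 : δ ≤ 1) :
    (numDerangements m : ℝ) ^ δ ≤
      ((m : ℝ) / (n : ℝ) ^ (1 - δ)) ^ m * (n.choose m : ℝ) ^ (1 - δ) := by
  have hm0 : (0 : ℝ) < m := by exact_mod_cast hm
  have hn0 : (0 : ℝ) < n := hm0.trans_le (by exact_mod_cast hmn)
  have hsplit : (m : ℝ) ^ δ = m / (n : ℝ) ^ (1 - δ) * ((n : ℝ) / m) ^ (1 - δ) := by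
    rw [Real.div_rpow hn0.le hm0.le, Real.rpow_sub hm0, Real.rpow_one]
    field_simp
  have hDm : (numDerangements m : ℝ) ≤ (m : ℝ) ^ m := by
    exact_mod_cast (numDerangements_le_factorial m).trans m.factorial_le_pow
  calc (numDerangements m : ℝ) ^ δ ≤ ((m : ℝ) ^ m) ^ δ := by gcongr
    _ = ((m : ℝ) / (n : ℝ) ^ (1 - δ)) ^ m * (((n : ℝ) / m) ^ m) ^ (1 - δ) := by
      rw [← Real.rpow_pow_comm hm0.le, hsplit, mul_pow, Real.rpow_pow_comm (by positivity)]
    _ ≤ ((m : ℝ) / (n : ℝ) ^ (1 - δ)) ^ m * (n.choose m : ℝ) ^ (1 - δ) := by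
      gcongr
      exact div_pow_le_choose hmn

theorem numDerangements_le_mul_V_sub_one_rpow {n m : ℕ} (hm : 1 ≤ m) (hmn : m ≤ n) {δ ε : ℝ}
    (hδ0 : 0 ≤ δ) (hδ1 : δ ≤ 1) (hε : (m : ℝ) / (n : ℝ) ^ (1 - δ) ≤ ε)
    (h1 : (m : ℝ) / (n : ℝ) ^ (1 - δ) ≤ 1) :
    (numDerangements m : ℝ) ≤ ε * ((V n m - 1 : ℕ) : ℝ) ^ (1 - δ) := by
  have hV : (n.choose m : ℝ) * numDerangements m ≤ ((V n m - 1 : ℕ) : ℝ) := by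
    exact_mod_cast choose_mul_numDerangements_le_V_sub_one n hm
  refine (Real.le_mul_mul_rpow_of_rpow_le (y := n.choose m) (ε := ε) (δ := δ) (by positivity)
    (by positivity) ?_).trans ?_
  · refine (numDerangements_rpow_le hm hmn hδ0 hδ1).trans ?_
    gcongr
    exact (pow_le_of_le_one (by positivity) h1 (by omega)).trans hε
  · have hε0 : 0 ≤ ε := (by positivity : (0 : ℝ) ≤ m / (n : ℝ) ^ (1 - δ)).trans hε
    gcongr

theorem stmt9_general (α δ : ℝ) (hα1 : 0 < α) (hα2 : α < 1) (hδ1 : 0 < δ)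
    (h : 0 < 1 - δ - α) :
    ∀ ε : ℝ, 0 < ε → ∃ N : ℕ, ∀ n : ℕ, N ≤ n → ∀ d : ℕ, 0 < d → (d : ℝ) = (n : ℝ) ^ α →
      (numDerangements (d - 1) : ℝ) ≤ ε * ((V n (d - 1) - 1 : ℕ) : ℝ) ^ (1 - δ) := by
  intro ε hε
  have hlim : Tendsto (fun n : ℕ => (n : ℝ) ^ (-(1 - δ - α))) atTop (𝓝 0) :=
    (tendsto_rpow_neg_atTop h).comp tendsto_natCast_atTop_atTop
  obtain ⟨N, hN⟩ := eventually_atTop.1 ((eventually_ge_atTop 2).and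
    (hlim.eventually (ge_mem_nhds (lt_min hε one_pos))))
  refine ⟨N, fun n hn d _ hdn => ?_⟩
  obtain ⟨hn2, hsmall⟩ := hN n hn
  have hn1 : (1 : ℝ) < n := by exact_mod_cast hn2
  have hd : 1 < d := by exact_mod_cast hdn ▸ Real.one_lt_rpow hn1 hα1
  have hm : ((d - 1 : ℕ) : ℝ) ≤ (n : ℝ) ^ α := by
    rw [← hdn]; exact_mod_cast d.sub_le 1
  have hq : ((d - 1 : ℕ) : ℝ) / (n : ℝ) ^ (1 - δ) ≤ min ε 1 :=
    calc ((d - 1 : ℕ) : ℝ) / (n : ℝ) ^ (1 - δ) ≤ (n : ℝ) ^ α / (n : ℝ) ^ (1 - δ) := by gcongr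
      _ = (n : ℝ) ^ (-(1 - δ - α)) := by rw [← Real.rpow_sub (by positivity)]; ring_nf
      _ ≤ min ε 1 := hsmall
  have hmn : d - 1 ≤ n := by
    exact_mod_cast hm.trans (Real.rpow_le_self_of_one_le hn1.le hα2.le)
  exact numDerangements_le_mul_V_sub_one_rpow (by omega) hmn hδ1.le (by linarith)
    (hq.trans (min_le_left _ _)) (hq.trans (min_le_right _ _))

theorem stmt9 (α δ : ℝ) (hα1 : 0 < α) (hα2 : α < 1) (hδ1 : 0 < δ) (hδ2 : δ < 1)
    (h : 0 < 1 - δ - α) :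
    ∀ ε : ℝ, 0 < ε → ∃ N : ℕ, ∀ n : ℕ, N ≤ n → ∀ d : ℕ, 0 < d → (d : ℝ) = (n : ℝ) ^ α →
      (numDerangements (d - 1) : ℝ) ≤ ε * ((V n (d - 1) - 1 : ℕ) : ℝ) ^ (1 - δ) :=
  stmt9_general α δ hα1 hα2 hδ1 h
end

section
/- Let n and d be positive integers with d ≤ n, and let C′ be an (n,d) PA of size M. Then P(n,d)·|B(C′)| ≥ n!·M, where B(C′) = {x ∈ S_n : there exists c ∈ C′ with d(x,c) ≤ d−1}. -/
open Finset

/- Let `C` be a largest `(n,d)` PA and `B = B(C')`. For every translate `g • B`, the elements of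
`C` outside `g • B` are at distance at least `d` from `g • C'`, so exchanging `C ∩ g • B` for
`g • C'` yields another PA; maximality of `C` forces `M ≤ |C ∩ g • B|`. Summing over `g ∈ S_n`,
and using that each element of `C` lies in exactly `|B|` translates of `B`, gives
`n! · M ≤ |C| · |B|`. Only symmetry and left invariance of the Hamming distance enter. -/

open scoped Pointwise

lemma Finset.sum_card_inter_smul {G : Type*} [Group G] [DecidableEq G] [Fintype G]
    (A B : Finset G) : ∑ g : G, #(A ∩ g • B) = #A * #B := by
  simp_rw [card_inter_smul, convolution]
  rw [← card_eq_sum_card_fiberwise (t := univ) (fun _ _ ↦ mem_univ _), card_product, card_inv]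

section Code

variable {G : Type*} (dist : G → G → ℕ) (d : ℕ)

def IsCode (C : Finset G) : Prop :=
  ∀ x ∈ C, ∀ y ∈ C, x ≠ y → d ≤ dist x y

def coveredBall [Fintype G] (C : Finset G) : Finset G :=
  {x | ∃ c ∈ C, dist x c ≤ d - 1}

variable {dist d}

lemma self_subset_coveredBall [Fintype G] (hself : ∀ x, dist x x = 0) (C : Finset G) :
    C ⊆ coveredBall dist d C := fun c hc ↦ by
  simp only [coveredBall, mem_filter, mem_univ, true_and]
  exact ⟨c, hc, by simp [hself]⟩

variable [Group G] [DecidableEq G] [Fintype G]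

lemma le_dist_of_notMem_smul_coveredBall (hmul : ∀ g x y, dist (g * x) (g * y) = dist x y)
    {C' : Finset G} {g x c' : G} (hx : x ∉ g • coveredBall dist d C') (hc' : c' ∈ C') :
    d ≤ dist x (g * c') := by
  rw [← inv_smul_mem_iff] at hx
  simp only [coveredBall, mem_filter, mem_univ, true_and, not_exists, not_and, not_le,
    smul_eq_mul] at hx
  have := hx c' hc'
  rw [← hmul g⁻¹, inv_mul_cancel_left]
  omega

lemma IsCode.sdiff_union_smul (hsymm : ∀ x y, dist x y = dist y x)
    (hmul : ∀ g x y, dist (g * x) (g * y) = dist x y) {C C' : Finset G}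
    (hC : IsCode dist d C) (hC' : IsCode dist d C') (g : G) :
    IsCode dist d (C \ g • coveredBall dist d C' ∪ g • C') := by
  have hcross : ∀ x ∈ C \ g • coveredBall dist d C', ∀ y ∈ g • C', d ≤ dist x y := by
    rintro x hx _ hy
    obtain ⟨c', hc', rfl⟩ := mem_smul_finset.mp hy
    exact le_dist_of_notMem_smul_coveredBall hmul (mem_sdiff.mp hx).2 hc'
  intro x hx y hy hxy
  rcases mem_union.mp hx with hx | hx <;> rcases mem_union.mp hy with hy | hy
  · exact hC x (mem_sdiff.mp hx).1 y (mem_sdiff.mp hy).1 hxy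
  · exact hcross x hx y hy
  · exact hsymm x y ▸ hcross y hy x hx
  · obtain ⟨a, ha, rfl⟩ := mem_smul_finset.mp hx
    obtain ⟨b, hb, rfl⟩ := mem_smul_finset.mp hy
    rw [smul_eq_mul, smul_eq_mul, hmul]
    exact hC' a ha b hb (ne_of_apply_ne _ hxy)

lemma card_sdiff_union_smul (hself : ∀ x, dist x x = 0) (C C' : Finset G) (g : G) :
    #(C \ g • coveredBall dist d C' ∪ g • C') =
      #C - #(C ∩ g • coveredBall dist d C') + #C' := by
  have hdisj : Disjoint (C \ g • coveredBall dist d C') (g • C') :=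
    disjoint_sdiff_self_left.mono_right
      (smul_finset_subset_smul_finset (self_subset_coveredBall hself C'))
  rw [card_union_of_disjoint hdisj, card_sdiff, inter_comm, card_smul_finset]

lemma IsCode.card_le_card_inter_smul_coveredBall (hsymm : ∀ x y, dist x y = dist y x)
    (hself : ∀ x, dist x x = 0) (hmul : ∀ g x y, dist (g * x) (g * y) = dist x y)
    {C C' : Finset G} (hC : IsCode dist d C) (hmax : ∀ D, IsCode dist d D → #D ≤ #C)
    (hC' : IsCode dist d C') (g : G) :
    #C' ≤ #(C ∩ g • coveredBall dist d C') := by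
  have hexchange := hmax _ (hC.sdiff_union_smul hsymm hmul hC' g)
  rw [card_sdiff_union_smul hself] at hexchange
  have hinter := card_le_card (inter_subset_left (s₁ := C) (s₂ := g • coveredBall dist d C'))
  omega

lemma IsCode.card_mul_card_le_card_mul_card_coveredBall (hsymm : ∀ x y, dist x y = dist y x)
    (hself : ∀ x, dist x x = 0) (hmul : ∀ g x y, dist (g * x) (g * y) = dist x y)
    {C C' : Finset G} (hC : IsCode dist d C) (hmax : ∀ D, IsCode dist d D → #D ≤ #C)
    (hC' : IsCode dist d C') :
    Fintype.card G * #C' ≤ #C * #(coveredBall dist d C') := by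
  calc Fintype.card G * #C' = ∑ _ : G, #C' := by rw [sum_const, card_univ, smul_eq_mul]
    _ ≤ ∑ g, #(C ∩ g • coveredBall dist d C') := sum_le_sum fun g _ ↦
        hC.card_le_card_inter_smul_coveredBall hsymm hself hmul hmax hC' g
    _ = #C * #(coveredBall dist d C') := Finset.sum_card_inter_smul _ _

end Code

section Permutations

variable {n : ℕ}

lemma permDist_eq_hammingDist (x y : Equiv.Perm (Fin n)) : permDist x y = hammingDist ⇑x ⇑y :=
  rfl

lemma permDist_comm (x y : Equiv.Perm (Fin n)) : permDist x y = permDist y x := by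
  simp only [permDist_eq_hammingDist, hammingDist_comm]

lemma permDist_self (x : Equiv.Perm (Fin n)) : permDist x x = 0 := by
  simp only [permDist_eq_hammingDist, hammingDist_self]

lemma permDist_mul_left (g x y : Equiv.Perm (Fin n)) : permDist (g * x) (g * y) = permDist x y :=
  hammingDist_comp (fun _ ↦ g) fun _ ↦ g.injective

end Permutations

lemma bddAbove_card_isPA (n d : ℕ) :
    BddAbove {m | ∃ C : Finset (Equiv.Perm (Fin n)), IsPA n d C ∧ #C = m} :=
  ⟨Fintype.card (Equiv.Perm (Fin n)), by rintro _ ⟨C, -, rfl⟩; exact card_le_univ C⟩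

lemma card_le_Pmax {n d : ℕ} {C : Finset (Equiv.Perm (Fin n))} (hC : IsPA n d C) :
    #C ≤ Pmax n d :=
  le_csSup (bddAbove_card_isPA n d) ⟨C, hC, rfl⟩

lemma exists_isPA_card_eq_Pmax (n d : ℕ) :
    ∃ C : Finset (Equiv.Perm (Fin n)), IsPA n d C ∧ #C = Pmax n d :=
  Nat.sSup_mem (s := {m | ∃ C : Finset (Equiv.Perm (Fin n)), IsPA n d C ∧ #C = m})
    ⟨0, ∅, by simp [IsPA], card_empty⟩ (bddAbove_card_isPA n d)

theorem stmt13_general (n d M : ℕ)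
    (C' : Finset (Equiv.Perm (Fin n))) (hC' : IsPA n d C') (hM : C'.card = M) :
    Pmax n d *
        (Finset.univ.filter fun x : Equiv.Perm (Fin n) =>
          ∃ c ∈ C', permDist x c ≤ d - 1).card ≥
      Nat.factorial n * M := by
  obtain ⟨C, hC, hCcard⟩ := exists_isPA_card_eq_Pmax n d
  have hcount := IsCode.card_mul_card_le_card_mul_card_coveredBall permDist_comm permDist_self
    permDist_mul_left hC (fun _ hD ↦ hCcard ▸ card_le_Pmax hD) hC'
  rwa [Fintype.card_perm, Fintype.card_fin, hCcard, hM] at hcount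

theorem stmt13 (n d M : ℕ) (hn : 0 < n) (hd : 0 < d) (hdn : d ≤ n)
    (C' : Finset (Equiv.Perm (Fin n))) (hC' : IsPA n d C') (hM : C'.card = M) :
    Pmax n d *
        (Finset.univ.filter fun x : Equiv.Perm (Fin n) =>
          ∃ c ∈ C', permDist x c ≤ d - 1).card ≥
      Nat.factorial n * M :=
  stmt13_general n d M C' hC' hM
end

section
/- Let n and d be positive integers with d ≤ n and d even. Then P[n,d−1] ≥ V(n, d/2 − 1) + C(n−1, d/2 − 1)·D_{d/2}. -/
open Finset

/-!
Take `Γ` to consist of the permutations moving fewer than `d/2` points together with those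
moving exactly `d/2` points, one of which is `0`. Two permutations can only disagree at a point
moved by one of them, so `d(x,y) ≤ wt x + wt y - |supp x ∩ supp y|`; this is at most `d - 1`
on `Γ`, the common moved point `0` saving one in the extremal case. A permutation with support
`s` is a derangement of `s`, which gives the two counts.
-/

open Equiv

section

variable {α : Type*} [DecidableEq α]

theorem card_filter_mem_powersetCard_succ {s : Finset α} {a : α} (ha : a ∈ s) (k : ℕ) :
    #{t ∈ powersetCard (k + 1) s | a ∈ t} = (#s - 1).choose k := by
  conv_lhs => rw [← insert_erase ha, powersetCard_succ_insert (notMem_erase a s)]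
  rw [filter_union,
    filter_false_of_mem fun t ht h => notMem_erase a s ((mem_powersetCard.1 ht).1 h),
    filter_true_of_mem fun t ht => ?_, empty_union, card_image_of_injOn, card_powersetCard,
    card_erase_of_mem ha]
  · intro t ht u hu htu
    have hat : a ∉ t := fun h => notMem_erase a s ((mem_powersetCard.1 ht).1 h)
    have hau : a ∉ u := fun h => notMem_erase a s ((mem_powersetCard.1 hu).1 h)
    rw [← erase_insert hat, ← erase_insert hau]
    exact congrArg (·.erase a) htu
  · obtain ⟨u, -, rfl⟩ := mem_image.1 ht
    exact mem_insert_self a u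

variable [Fintype α]

theorem card_filter_support_eq (s : Finset α) :
    #{σ : Perm α | σ.support = s} = numDerangements #s := by
  have hfix : ∀ σ : Perm α, σ.support = s ↔ ∀ a, a ∉ s ↔ a ∈ Function.fixedPoints σ := by
    intro σ
    simp only [Finset.ext_iff, Perm.mem_support, Function.mem_fixedPoints, Function.IsFixedPt]
    exact forall_congr' fun a => by tauto
  rw [← Fintype.card_coe s, ← card_derangements_eq_numDerangements,
    Fintype.card_congr (derangements.subtypeEquiv (· ∈ s)), Fintype.card_subtype]
  exact congrArg card (filter_congr fun σ _ => hfix σ)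

theorem card_filter_support_mem (𝒮 : Finset (Finset α)) :
    #{σ : Perm α | σ.support ∈ 𝒮} = ∑ s ∈ 𝒮, numDerangements #s := by
  rw [card_eq_sum_card_fiberwise (f := Perm.support) (t := 𝒮) fun σ hσ => by simpa using hσ]
  refine sum_congr rfl fun s hs => ?_
  rw [filter_filter, ← card_filter_support_eq]
  congr 1
  exact filter_congr fun σ _ => and_iff_right_of_imp fun h => h ▸ hs

theorem card_filter_card_support_eq (i : ℕ) :
    #{σ : Perm α | #σ.support = i} = (Fintype.card α).choose i * numDerangements i := by
  have h := card_filter_support_mem (α := α) (powersetCard i univ)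
  simp only [mem_powersetCard, subset_univ, true_and] at h
  rw [h, sum_congr rfl fun s hs => by rw [(mem_powersetCard.1 hs).2], sum_const,
    card_powersetCard, card_univ, smul_eq_mul]

theorem card_filter_card_support_lt (r : ℕ) :
    #{σ : Perm α | #σ.support < r} =
      ∑ i ∈ range r, (Fintype.card α).choose i * numDerangements i := by
  rw [card_eq_sum_card_fiberwise (f := fun σ : Perm α => #σ.support) (t := range r)
    fun σ hσ => by simpa using hσ]
  refine sum_congr rfl fun i hi => ?_
  rw [filter_filter, ← card_filter_card_support_eq]
  congr 1
  exact filter_congr fun σ _ => and_iff_right_of_imp fun h => h.symm ▸ mem_range.1 hi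

theorem card_filter_card_support_eq_of_mem (a : α) {m : ℕ} (hm : 1 ≤ m) :
    #{σ : Perm α | #σ.support = m ∧ a ∈ σ.support} =
      (Fintype.card α - 1).choose (m - 1) * numDerangements m := by
  obtain ⟨k, rfl⟩ := Nat.exists_eq_add_of_le' hm
  have h := card_filter_support_mem (α := α) {t ∈ powersetCard (k + 1) univ | a ∈ t}
  simp only [mem_filter, mem_powersetCard, subset_univ, true_and] at h
  rw [h, sum_congr rfl fun s hs => by rw [(mem_powersetCard.1 (mem_filter.1 hs).1).2], sum_const,
    card_filter_mem_powersetCard_succ (mem_univ a), card_univ, smul_eq_mul, Nat.add_sub_cancel]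

end

theorem permWt_eq_card_support {n : ℕ} (σ : Perm (Fin n)) : permWt σ = #σ.support := rfl

theorem permDist_add_card_inter_support_le {n : ℕ} (x y : Perm (Fin n)) :
    permDist x y + #(x.support ∩ y.support) ≤ permWt x + permWt y := by
  have hsub : ({i | x i ≠ y i} : Finset (Fin n)) ⊆ x.support ∪ y.support := fun i hi => by
    by_contra h
    simp_all
  rw [permWt_eq_card_support, permWt_eq_card_support, ← card_union_add_card_inter]
  exact Nat.add_le_add_right (card_le_card hsub) _

theorem card_le_PmaxLe {n e : ℕ} (Γ : Finset (Perm (Fin n)))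
    (hΓ : ∀ x ∈ Γ, ∀ y ∈ Γ, x ≠ y → permDist x y ≤ e) : #Γ ≤ PmaxLe n e :=
  le_csSup ⟨Fintype.card (Perm (Fin n)), by
    rintro _ ⟨Γ', -, rfl⟩
    exact card_le_univ Γ'⟩ ⟨Γ, hΓ, rfl⟩

theorem permDist_le_of_card_support {n m : ℕ} {a : Fin n} {x y : Perm (Fin n)}
    (hx : #x.support < m ∨ #x.support = m ∧ a ∈ x.support)
    (hy : #y.support < m ∨ #y.support = m ∧ a ∈ y.support) :
    permDist x y ≤ m + m - 1 := by
  have hdist := permDist_add_card_inter_support_le x y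
  rw [permWt_eq_card_support, permWt_eq_card_support] at hdist
  rcases hx with hx | ⟨hx, hax⟩ <;> rcases hy with hy | ⟨hy, hay⟩
  any_goals omega
  have : 0 < #(x.support ∩ y.support) := card_pos.2 ⟨a, mem_inter.2 ⟨hax, hay⟩⟩
  omega

theorem stmt15_general (n d : ℕ) (hn : 0 < n) (hd : 0 < d) (heven : Even d) :
    V n (d / 2 - 1) + Nat.choose (n - 1) (d / 2 - 1) * numDerangements (d / 2) ≤
      PmaxLe n (d - 1) := by
  obtain ⟨m, rfl⟩ := heven
  have hm : 1 ≤ m := by omega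
  rw [show (m + m) / 2 = m by omega]
  let a : Fin n := ⟨0, hn⟩
  let Γ : Finset (Perm (Fin n)) := {σ | #σ.support < m ∨ #σ.support = m ∧ a ∈ σ.support}
  have hcard : #Γ = V n (m - 1) + (n - 1).choose (m - 1) * numDerangements m := by
    rw [show Γ = _ from filter_or ..,
      card_union_of_disjoint (disjoint_filter.2 fun σ _ h h' => by omega),
      card_filter_card_support_lt, card_filter_card_support_eq_of_mem a hm, Fintype.card_fin,
      V, Nat.sub_add_cancel hm]
  exact hcard ▸ card_le_PmaxLe Γ fun x hx y hy _ =>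
    permDist_le_of_card_support (mem_filter.1 hx).2 (mem_filter.1 hy).2

theorem stmt15 (n d : ℕ) (hn : 0 < n) (hd : 0 < d) (hdn : d ≤ n) (heven : Even d) :
    V n (d / 2 - 1) + Nat.choose (n - 1) (d / 2 - 1) * numDerangements (d / 2) ≤
      PmaxLe n (d - 1) :=
  stmt15_general n d hn hd heven
end
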